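/- arXiv:1012.5251 — 2 statements merged into one kernel-verified Lean document; each statement's English description precedes it below -/
import Mathlib

section
/- Let n, m ≥ 1, N = n·m, and let A ∈ Matrix (Fin N) (Fin N) ℂ be block-upper-triangular. Then for every pair (i,j) lying strictly below the block diagonal (⌈i/m⌉ > ⌈j/m⌉), every matrix G ∈ Matrix (Fin N) (Fin N) ℂ, and all indices k, l, one has (sgn(i−k)−1)·A_{k,j}·G_{i,l} + (sgn(j−l)+1)·G_{k,j}·A_{i,l} + (sgn(j−k)+1)·A_{i,k}·G_{j,l} + (sgn(i−l)−1)·A_{l,j}·G_{k,i} = 0. (This is the consistency of the block-upper-triangular reduction with the mixed bracket {A_{i,j}, G^{(p)}_{k,l}} of the affine algebra.) -/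
/-!
Each of the four terms vanishes on its own. Its `A`-entry either lies strictly below the block
diagonal, or its block order is squeezed by that of `(i, j)`: e.g. in `(sgn(i-k) - 1) A_{k,j}`,
block `k` ≤ block `j` < block `i` forces `k < i`, so the coefficient is `1 - 1 = 0`.
-/

open Matrix

noncomputable section

/-- The sign of the difference of two indices, as a complex number
(`sgn : ℤ → ℤ` with `sgn 0 = 0`). -/
def fsgn {N : ℕ} (a b : Fin N) : ℂ := ((((a : ℕ) : ℤ) - ((b : ℕ) : ℤ)).sign : ℤ)

/-- `A` is block-upper-triangular with respect to `m × m` blocks. -/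
def IsBUT (n m : ℕ) (A : Matrix (Fin (n * m)) (Fin (n * m)) ℂ) : Prop :=
  ∀ i j : Fin (n * m), (j : ℕ) / m < (i : ℕ) / m → A i j = 0

/-- The mixed bracket `{A_{i,j}, G^{(p)}_{k,l}}` of the affine algebra between a
zero-level entry of `A` and a level-`p` entry of `G`. -/
def mixedBr {N : ℕ} (A G : Matrix (Fin N) (Fin N) ℂ) (i j k l : Fin N) : ℂ :=
  (fsgn i k - 1) * A k j * G i l + (fsgn j l + 1) * G k j * A i l
    + (fsgn j k + 1) * A i k * G j l + (fsgn i l - 1) * A l j * G k i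

lemma fsgn_eq_one_of_lt {N : ℕ} {a b : Fin N} (h : b < a) : fsgn a b = 1 := by
  rw [fsgn, Int.sign_eq_one_iff_pos.2 (by omega)]
  norm_num

lemma fsgn_eq_neg_one_of_lt {N : ℕ} {a b : Fin N} (h : a < b) : fsgn a b = -1 := by
  rw [fsgn, Int.sign_eq_neg_one_iff_neg.2 (by omega)]
  norm_num

namespace IsBUT

variable {n m : ℕ} {A : Matrix (Fin (n * m)) (Fin (n * m)) ℂ} {i j : Fin (n * m)}

lemma fsgn_sub_one_mul_eq_zero (hA : IsBUT n m A) (hij : (j : ℕ) / m < (i : ℕ) / m)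
    (k : Fin (n * m)) : (fsgn i k - 1) * A k j = 0 := by
  rcases lt_or_ge ((j : ℕ) / m) ((k : ℕ) / m) with hjk | hkj
  · rw [hA k j hjk, mul_zero]
  · rw [fsgn_eq_one_of_lt (Nat.lt_of_div_lt_div (hkj.trans_lt hij)), sub_self, zero_mul]

lemma fsgn_add_one_mul_eq_zero (hA : IsBUT n m A) (hij : (j : ℕ) / m < (i : ℕ) / m)
    (k : Fin (n * m)) : (fsgn j k + 1) * A i k = 0 := by
  rcases lt_or_ge ((k : ℕ) / m) ((i : ℕ) / m) with hki | hik
  · rw [hA i k hki, mul_zero]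
  · rw [fsgn_eq_neg_one_of_lt (Nat.lt_of_div_lt_div (hij.trans_le hik)), neg_add_cancel, zero_mul]

end IsBUT

theorem affine_reduction_but_general (n m : ℕ)
    (A : Matrix (Fin (n * m)) (Fin (n * m)) ℂ) (hA : IsBUT n m A)
    (i j : Fin (n * m)) (hij : (j : ℕ) / m < (i : ℕ) / m)
    (G : Matrix (Fin (n * m)) (Fin (n * m)) ℂ) (k l : Fin (n * m)) :
    mixedBr A G i j k l = 0 := by
  rw [mixedBr, mul_right_comm _ (G k j), hA.fsgn_sub_one_mul_eq_zero hij k,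
    hA.fsgn_add_one_mul_eq_zero hij l, hA.fsgn_add_one_mul_eq_zero hij k,
    hA.fsgn_sub_one_mul_eq_zero hij l]
  simp

/-- consistency of the block-upper-triangular reduction with the mixed
bracket `{A_{i,j}, G^{(p)}_{k,l}}` of the affine algebra: the bracket of any
constrained-to-zero entry of `A` with any entry of `G` vanishes. -/
theorem affine_reduction_but (n m : ℕ) (hn : 1 ≤ n) (hm : 1 ≤ m)
    (A : Matrix (Fin (n * m)) (Fin (n * m)) ℂ) (hA : IsBUT n m A)
    (i j : Fin (n * m)) (hij : (j : ℕ) / m < (i : ℕ) / m)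
    (G : Matrix (Fin (n * m)) (Fin (n * m)) ℂ) (k l : Fin (n * m)) :
    mixedBr A G i j k l = 0 :=
  affine_reduction_but_general n m A hA i j hij G k l
end
end

section
/- Let n ≥ 3, m ≥ 1, N = n·m, and 1 ≤ I ≤ n−2. For a block-upper-triangular A ∈ Matrix (Fin N) (Fin N) ℂ with all diagonal m×m blocks invertible, define β_{J,J+1}(A) := B_{J,J+1}(A)·A·B_{J,J+1}(A)ᵀ, where B_{J,J+1}(A) is the identity except in block rows/columns J, J+1 where it equals [[A_{J,J+1}ᵀ·A_{J,J}^{−T}, −𝟙_m],[A_{J,J}·A_{J,J}^{−T}, 0]]. Then the braid relation holds: β_{I,I+1}(β_{I+1,I+2}(β_{I,I+1}(A))) = β_{I+1,I+2}(β_{I,I+1}(β_{I+1,I+2}(A))). (The compositions are well defined because each β permutes the set of diagonal blocks, hence preserves their invertibility.) -/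
open Matrix

noncomputable section

/-- The `(K,L)` block (of size `m × m`) of an `nm × nm` matrix. -/
def blk {n m : ℕ} (A : Matrix (Fin (n * m)) (Fin (n * m)) ℂ) (K L : Fin n) :
    Matrix (Fin m) (Fin m) ℂ :=
  fun a b =>
    A ⟨K.val * m + a.val, by
        have ha := a.isLt
        have h2 : (K.val + 1) * m ≤ n * m := Nat.mul_le_mul_right m K.isLt
        have h3 : K.val * m + m = (K.val + 1) * m := by ring
        omega⟩
      ⟨L.val * m + b.val, by
        have hb := b.isLt
        have h2 : (L.val + 1) * m ≤ n * m := Nat.mul_le_mul_right m L.isLt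
        have h3 : L.val * m + m = (L.val + 1) * m := by ring
        omega⟩

/-- The block index of a global index. -/
def blkIdx {n m : ℕ} (hm : 0 < m) (i : Fin (n * m)) : Fin n :=
  ⟨(i : ℕ) / m, (Nat.div_lt_iff_lt_mul hm).mpr i.isLt⟩

/-- The position of a global index inside its block. -/
def inIdx {n m : ℕ} (hm : 0 < m) (i : Fin (n * m)) : Fin m :=
  ⟨(i : ℕ) % m, Nat.mod_lt _ hm⟩

/-- The braid-group matrix `B_{I,I+1}(A)`. -/
def braidB {n m : ℕ} (hm : 0 < m) (I I' : Fin n)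
    (A : Matrix (Fin (n * m)) (Fin (n * m)) ℂ) : Matrix (Fin (n * m)) (Fin (n * m)) ℂ :=
  fun i j =>
    (if blkIdx hm i = I ∧ blkIdx hm j = I then (blk A I I')ᵀ * ((blk A I I)ᵀ)⁻¹
      else if blkIdx hm i = I ∧ blkIdx hm j = I' then -1
      else if blkIdx hm i = I' ∧ blkIdx hm j = I then blk A I I * ((blk A I I)ᵀ)⁻¹
      else if blkIdx hm i = I' ∧ blkIdx hm j = I' then 0
      else if blkIdx hm i = blkIdx hm j then 1 else 0)
    (inIdx hm i) (inIdx hm j)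

/-- The braid-group action `β_{I,I+1}(A) = B_{I,I+1}(A)·A·B_{I,I+1}(A)ᵀ`. -/
def braidAct {n m : ℕ} (hm : 0 < m) (I I' : Fin n)
    (A : Matrix (Fin (n * m)) (Fin (n * m)) ℂ) : Matrix (Fin (n * m)) (Fin (n * m)) ℂ :=
  braidB hm I I' A * A * (braidB hm I I' A)ᵀ

/-! Each `β_{I,J}` is the congruence `X ↦ B X Bᵀ` by a matrix `B = B_{I,J}(X)` that is the identity
outside block rows and columns `I, J`, so each side of the braid relation is the congruence of `A` by
a product of three such factors. The factors depend only on a few blocks of the intermediate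
matrices, which are computed explicitly using `A_{I+1,I} = 0` and the invertibility of `A_{I,I}`.
The two triple products then agree by a `3 × 3` block computation. -/

namespace Matrix

section Ring

variable {ι R : Type*} [DecidableEq ι] [Ring R]

def braidElem (I J : ι) (u v : R) : Matrix ι ι R :=
  of fun K L =>
    if K = I ∧ L = I then u
    else if K = I ∧ L = J then -1
    else if K = J ∧ L = I then v
    else if K = J ∧ L = J then 0
    else if K = L then 1 else 0

variable {I J : ι}

theorem braidElem_apply_left (hIJ : I ≠ J) (u v : R) (L : ι) :
    braidElem I J u v I L = if L = I then u else if L = J then -1 else 0 := by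
  by_cases hL : L = I
  · simp [braidElem, hL]
  · simp [braidElem, hIJ, hL, Ne.symm hL]

theorem braidElem_apply_right (hIJ : I ≠ J) (u v : R) (L : ι) :
    braidElem I J u v J L = if L = I then v else 0 := by
  by_cases hL : L = J
  · simp [braidElem, hIJ.symm, hL]
  · simp [braidElem, hIJ.symm, hL, Ne.symm hL]

theorem braidElem_apply_of_ne {K : ι} (hKI : K ≠ I) (hKJ : K ≠ J) (u v : R) (L : ι) :
    braidElem I J u v K L = (1 : Matrix ι ι R) K L := by
  simp [braidElem, hKI, hKJ, one_apply]

variable [Fintype ι]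

theorem braidElem_mul_apply (hIJ : I ≠ J) (u v : R) (M : Matrix ι ι R) (K L : ι) :
    (braidElem I J u v * M) K L =
      if K = I then u * M I L - M J L else if K = J then v * M I L else M K L := by
  by_cases hKI : K = I
  · subst hKI
    rw [mul_apply, Fintype.sum_eq_add K J hIJ (fun P hP => by
      simp [braidElem_apply_left hIJ, hP.1, hP.2])]
    simp [braidElem_apply_left hIJ, hIJ.symm, sub_eq_add_neg]
  by_cases hKJ : K = J
  · subst hKJ
    rw [mul_apply, Fintype.sum_eq_single I (fun P hP => by simp [braidElem_apply_right hIJ, hP])]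
    simp [braidElem_apply_right hIJ, hKI]
  · simp [braidElem_apply_of_ne hKI hKJ, hKI, hKJ, mul_apply, one_apply]

theorem braidElem_braid {K : ι} (hIJ : I ≠ J) (hIK : I ≠ K) (hJK : J ≠ K)
    {u₁ v₁ u₂ u₃ v₃ u₂' u₃' : R} (h₁ : u₃ * u₁ - u₂ * v₁ = u₂') (h₂ : u₃' * v₁ = v₃ * u₁) :
    braidElem I J u₃ v₃ * braidElem J K u₂ v₁ * braidElem I J u₁ v₁ =
      braidElem J K u₃' v₁ * braidElem I J u₂' v₁ * braidElem J K u₃ v₃ := by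
  have hJI := hIJ.symm
  have hKI := hIK.symm
  have hKJ := hJK.symm
  ext X Y
  simp only [mul_assoc, braidElem_mul_apply hIJ, braidElem_mul_apply hJK,
    braidElem_apply_left hIJ, braidElem_apply_right hIJ, braidElem_apply_left hJK,
    braidElem_apply_right hJK, braidElem_apply_of_ne hIJ hIK, braidElem_apply_of_ne hKI hKJ,
    if_neg hIJ, if_neg hIK, if_neg hJK, if_neg hJI, if_neg hKI, if_neg hKJ]
  split_ifs <;> subst_vars <;> simp_all [braidElem_apply_of_ne, one_apply_ne, one_apply_ne']

end Ring

section Block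

variable {ι κ α : Type*}

def blockTranspose (M : Matrix ι ι (Matrix κ κ α)) : Matrix ι ι (Matrix κ κ α) :=
  of fun K L => (M L K)ᵀ

@[simp]
theorem blockTranspose_apply (M : Matrix ι ι (Matrix κ κ α)) (K L : ι) :
    blockTranspose M K L = (M L K)ᵀ := rfl

@[simp]
theorem blockTranspose_blockTranspose (M : Matrix ι ι (Matrix κ κ α)) :
    blockTranspose (blockTranspose M) = M := rfl

theorem comp_blockTranspose (M : Matrix ι ι (Matrix κ κ α)) :
    comp ι ι κ κ α (blockTranspose M) = (comp ι ι κ κ α M)ᵀ := rfl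

variable [Fintype ι] [Fintype κ] [CommRing α]

theorem blockTranspose_mul (M N : Matrix ι ι (Matrix κ κ α)) :
    blockTranspose (M * N) = blockTranspose N * blockTranspose M := by
  have comp_mul : ∀ X Y : Matrix ι ι (Matrix κ κ α),
      comp ι ι κ κ α (X * Y) = comp ι ι κ κ α X * comp ι ι κ κ α Y :=
    map_mul (compRingEquiv ι κ α)
  apply (comp ι ι κ κ α).injective
  rw [comp_mul, comp_blockTranspose, comp_blockTranspose, comp_blockTranspose, comp_mul,
    transpose_mul]

variable [DecidableEq ι] [DecidableEq κ] {I J : ι}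

theorem mul_blockTranspose_braidElem_apply (hIJ : I ≠ J) (u v : Matrix κ κ α)
    (M : Matrix ι ι (Matrix κ κ α)) (K L : ι) :
    (M * blockTranspose (braidElem I J u v)) K L =
      if L = I then M K I * uᵀ - M K J else if L = J then M K I * vᵀ else M K L := by
  calc (M * blockTranspose (braidElem I J u v)) K L
      = (blockTranspose (M * blockTranspose (braidElem I J u v)) L K)ᵀ :=
        (transpose_transpose _).symm
    _ = ((braidElem I J u v * blockTranspose M) L K)ᵀ := by
        rw [blockTranspose_mul, blockTranspose_blockTranspose]
    _ = _ := by
        rw [braidElem_mul_apply hIJ]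
        split_ifs <;> simp [transpose_mul]

def braidFactor (I J : ι) (M : Matrix ι ι (Matrix κ κ α)) : Matrix ι ι (Matrix κ κ α) :=
  braidElem I J ((M I J)ᵀ * (M I I)ᵀ⁻¹) (M I I * (M I I)ᵀ⁻¹)

def braidMove (I J : ι) (M : Matrix ι ι (Matrix κ κ α)) : Matrix ι ι (Matrix κ κ α) :=
  braidFactor I J M * M * blockTranspose (braidFactor I J M)

variable {M : Matrix ι ι (Matrix κ κ α)}

theorem braidMove_apply_right_right (hIJ : I ≠ J) (hI : IsUnit (M I I).det) :
    braidMove I J M J J = M I I := by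
  rw [braidMove, braidFactor, mul_blockTranspose_braidElem_apply hIJ]
  simp only [braidElem_mul_apply hIJ, ↓reduceIte, if_neg hIJ.symm]
  have := invertibleOfIsUnitDet _ hI
  simp [mul_assoc, transpose_mul, transpose_nonsing_inv]

theorem braidMove_apply_left_left (hIJ : I ≠ J) (hJI : M J I = 0) (hI : IsUnit (M I I).det) :
    braidMove I J M I I = M J J := by
  rw [braidMove, braidFactor, mul_blockTranspose_braidElem_apply hIJ]
  simp only [braidElem_mul_apply hIJ, ↓reduceIte, hJI]
  have := invertibleOfIsUnitDet _ hI
  simp [mul_assoc, transpose_mul, transpose_nonsing_inv]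

theorem braidMove_apply_left_right (hIJ : I ≠ J) (hJI : M J I = 0) (hI : IsUnit (M I I).det) :
    braidMove I J M I J = (M I J)ᵀ := by
  rw [braidMove, braidFactor, mul_blockTranspose_braidElem_apply hIJ]
  simp only [braidElem_mul_apply hIJ, ↓reduceIte, if_neg hIJ.symm, hJI]
  have := invertibleOfIsUnitDet _ hI
  simp [mul_assoc, transpose_mul, transpose_nonsing_inv]

theorem braidMove_apply_left_of_ne {K : ι} (hIJ : I ≠ J) (hKI : K ≠ I) (hKJ : K ≠ J) :
    braidMove I J M I K = (M I J)ᵀ * (M I I)ᵀ⁻¹ * M I K - M J K := by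
  rw [braidMove, braidFactor, mul_blockTranspose_braidElem_apply hIJ]
  simp only [braidElem_mul_apply hIJ, ↓reduceIte, if_neg hKI, if_neg hKJ]

theorem braidMove_apply_right_of_ne {K : ι} (hIJ : I ≠ J) (hKI : K ≠ I) (hKJ : K ≠ J) :
    braidMove I J M J K = M I I * (M I I)ᵀ⁻¹ * M I K := by
  rw [braidMove, braidFactor, mul_blockTranspose_braidElem_apply hIJ]
  simp only [braidElem_mul_apply hIJ, ↓reduceIte, if_neg hIJ.symm, if_neg hKI, if_neg hKJ]

theorem braidMove_apply_of_ne_left {K : ι} (hIJ : I ≠ J) (hKI : K ≠ I) (hKJ : K ≠ J) :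
    braidMove I J M K I = M K I * ((M I J)ᵀ * (M I I)ᵀ⁻¹)ᵀ - M K J := by
  rw [braidMove, braidFactor, mul_blockTranspose_braidElem_apply hIJ]
  simp only [braidElem_mul_apply hIJ, ↓reduceIte, if_neg hKI, if_neg hKJ]

theorem braidMove_apply_of_ne_right {K : ι} (hIJ : I ≠ J) (hKI : K ≠ I) (hKJ : K ≠ J) :
    braidMove I J M K J = M K I * (M I I * (M I I)ᵀ⁻¹)ᵀ := by
  rw [braidMove, braidFactor, mul_blockTranspose_braidElem_apply hIJ]
  simp only [braidElem_mul_apply hIJ, ↓reduceIte, if_neg hIJ.symm, if_neg hKI, if_neg hKJ]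

theorem braidMove_apply_of_ne_of_ne {K L : ι} (hIJ : I ≠ J) (hKI : K ≠ I) (hKJ : K ≠ J)
    (hLI : L ≠ I) (hLJ : L ≠ J) : braidMove I J M K L = M K L := by
  rw [braidMove, braidFactor, mul_blockTranspose_braidElem_apply hIJ]
  simp only [braidElem_mul_apply hIJ, if_neg hKI, if_neg hKJ, if_neg hLI, if_neg hLJ]

theorem braidMove_braidMove_braidMove (I₁ J₁ I₂ J₂ I₃ J₃ : ι) (M : Matrix ι ι (Matrix κ κ α)) :
    braidMove I₃ J₃ (braidMove I₂ J₂ (braidMove I₁ J₁ M)) =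
      braidFactor I₃ J₃ (braidMove I₂ J₂ (braidMove I₁ J₁ M)) *
          braidFactor I₂ J₂ (braidMove I₁ J₁ M) * braidFactor I₁ J₁ M * M *
        blockTranspose (braidFactor I₃ J₃ (braidMove I₂ J₂ (braidMove I₁ J₁ M)) *
          braidFactor I₂ J₂ (braidMove I₁ J₁ M) * braidFactor I₁ J₁ M) := by
  have conj (P₁ P₂ P₃ N : Matrix ι ι (Matrix κ κ α)) :
      P₃ * (P₂ * (P₁ * N * blockTranspose P₁) * blockTranspose P₂) * blockTranspose P₃ =
        P₃ * P₂ * P₁ * N * blockTranspose (P₃ * P₂ * P₁) := by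
    simp only [blockTranspose_mul, mul_assoc]
  exact conj _ _ _ M

theorem braidMove_braid {K : ι} (hIJ : I ≠ J) (hIK : I ≠ K) (hJK : J ≠ K) (hJI : M J I = 0)
    (hI : IsUnit (M I I).det) :
    braidMove I J (braidMove J K (braidMove I J M)) =
      braidMove J K (braidMove I J (braidMove J K M)) := by
  have := invertibleOfIsUnitDet _ hI
  have hB₂ : braidFactor J K (braidMove I J M) =
      braidElem J K ((M I I * (M I I)ᵀ⁻¹ * M I K)ᵀ * (M I I)ᵀ⁻¹) (M I I * (M I I)ᵀ⁻¹) := by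
    rw [braidFactor, braidMove_apply_right_right hIJ hI,
      braidMove_apply_right_of_ne hIJ hIK.symm hJK.symm]
  have hB₃ : braidFactor I J (braidMove J K (braidMove I J M)) =
      braidElem I J ((M J K)ᵀ * (M J J)ᵀ⁻¹) (M J J * (M J J)ᵀ⁻¹) := by
    rw [braidFactor, braidMove_apply_of_ne_of_ne hJK hIJ hIK hIJ hIK,
      braidMove_apply_of_ne_left hJK hIJ hIK, braidMove_apply_left_left hIJ hJI hI,
      braidMove_apply_left_right hIJ hJI hI, braidMove_apply_left_of_ne hIJ hIK.symm hJK.symm,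
      braidMove_apply_right_right hIJ hI, braidMove_apply_right_of_ne hIJ hIK.symm hJK.symm]
    simp [mul_assoc, transpose_mul, transpose_nonsing_inv]
  have hC₂ : braidFactor I J (braidMove J K M) =
      braidElem I J ((M I J * ((M J K)ᵀ * (M J J)ᵀ⁻¹)ᵀ - M I K)ᵀ * (M I I)ᵀ⁻¹)
        (M I I * (M I I)ᵀ⁻¹) := by
    rw [braidFactor, braidMove_apply_of_ne_of_ne hJK hIJ hIK hIJ hIK,
      braidMove_apply_of_ne_left hJK hIJ hIK]
  have hII : IsUnit (braidMove J K M I I).det := by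
    rwa [braidMove_apply_of_ne_of_ne hJK hIJ hIK hIJ hIK]
  have hC₃ : braidFactor J K (braidMove I J (braidMove J K M)) =
      braidElem J K ((M I I * (M I I)ᵀ⁻¹ * (M I J * (M J J * (M J J)ᵀ⁻¹)ᵀ))ᵀ * (M I I)ᵀ⁻¹)
        (M I I * (M I I)ᵀ⁻¹) := by
    rw [braidFactor, braidMove_apply_right_right hIJ hII,
      braidMove_apply_right_of_ne hIJ hIK.symm hJK.symm,
      braidMove_apply_of_ne_of_ne hJK hIJ hIK hIJ hIK, braidMove_apply_of_ne_right hJK hIJ hIK]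
  have key : braidFactor I J (braidMove J K (braidMove I J M)) *
        braidFactor J K (braidMove I J M) * braidFactor I J M =
      braidFactor J K (braidMove I J (braidMove J K M)) *
        braidFactor I J (braidMove J K M) * braidFactor J K M := by
    rw [hB₃, hB₂, hC₃, hC₂]
    exact braidElem_braid hIJ hIK hJK
      (by simp [mul_assoc, sub_mul, transpose_mul, transpose_nonsing_inv])
      (by simp [mul_assoc, transpose_mul, transpose_nonsing_inv])
  rw [braidMove_braidMove_braidMove, braidMove_braidMove_braidMove, key]

end Block
end Matrix

section FinBlocks

variable {n m : ℕ}

def blockEquiv (n m : ℕ) (α : Type*) [Semiring α] :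
    Matrix (Fin (n * m)) (Fin (n * m)) α ≃+* Matrix (Fin n) (Fin n) (Matrix (Fin m) (Fin m) α) :=
  (reindexRingEquiv α finProdFinEquiv.symm).trans (compRingEquiv (Fin n) (Fin m) α).symm

theorem blockEquiv_apply_apply {α : Type*} [Semiring α] (A : Matrix (Fin (n * m)) (Fin (n * m)) α)
    (K L : Fin n) (a b : Fin m) :
    blockEquiv n m α A K L a b = A (finProdFinEquiv (K, a)) (finProdFinEquiv (L, b)) := rfl

theorem blockEquiv_transpose {α : Type*} [CommRing α] (A : Matrix (Fin (n * m)) (Fin (n * m)) α) :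
    blockEquiv n m α Aᵀ = blockTranspose (blockEquiv n m α A) := rfl

theorem blockEquiv_apply (A : Matrix (Fin (n * m)) (Fin (n * m)) ℂ) (K L : Fin n) :
    blockEquiv n m ℂ A K L = blk A K L := by
  ext a b
  rw [blockEquiv_apply_apply]
  congr 1 <;> ext <;> simp only [finProdFinEquiv_apply_val] <;> ring

theorem blkIdx_finProdFinEquiv (hm : 0 < m) (p : Fin n × Fin m) :
    blkIdx hm (finProdFinEquiv p) = p.1 :=
  congrArg Prod.fst (finProdFinEquiv.symm_apply_apply p)

theorem inIdx_finProdFinEquiv (hm : 0 < m) (p : Fin n × Fin m) :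
    inIdx hm (finProdFinEquiv p) = p.2 :=
  congrArg Prod.snd (finProdFinEquiv.symm_apply_apply p)

theorem blockEquiv_braidB (hm : 0 < m) (I J : Fin n) (A : Matrix (Fin (n * m)) (Fin (n * m)) ℂ) :
    blockEquiv n m ℂ (braidB hm I J A) = braidFactor I J (blockEquiv n m ℂ A) := by
  ext K L a b
  rw [blockEquiv_apply_apply, braidB, blkIdx_finProdFinEquiv, blkIdx_finProdFinEquiv,
    inIdx_finProdFinEquiv, inIdx_finProdFinEquiv, braidFactor, blockEquiv_apply, blockEquiv_apply]
  rfl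

theorem blockEquiv_braidAct (hm : 0 < m) (I J : Fin n) (A : Matrix (Fin (n * m)) (Fin (n * m)) ℂ) :
    blockEquiv n m ℂ (braidAct hm I J A) = braidMove I J (blockEquiv n m ℂ A) := by
  rw [braidAct, map_mul, map_mul, blockEquiv_transpose, blockEquiv_braidB]
  rfl

theorem IsBUT.blockEquiv_apply_eq_zero {A : Matrix (Fin (n * m)) (Fin (n * m)) ℂ}
    (hA : IsBUT n m A) {K L : Fin n} (hLK : L < K) : blockEquiv n m ℂ A K L = 0 := by
  ext a b
  rw [blockEquiv_apply_apply]
  apply hA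
  have hm := a.pos
  simp only [finProdFinEquiv_apply_val, Nat.add_mul_div_left _ _ hm, Nat.div_eq_of_lt a.isLt,
    Nat.div_eq_of_lt b.isLt]
  omega

end FinBlocks

theorem braid_relation_general (n m : ℕ) (hm : 1 ≤ m)
    (I I' I'' : Fin n) (hI' : (I' : ℕ) = (I : ℕ) + 1) (hI'' : (I'' : ℕ) = (I : ℕ) + 2)
    (A : Matrix (Fin (n * m)) (Fin (n * m)) ℂ) (hA : IsBUT n m A)
    (hdiag : ∀ J : Fin n, IsUnit (blk A J J).det) :
    braidAct hm I I' (braidAct hm I' I'' (braidAct hm I I' A))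
      = braidAct hm I' I'' (braidAct hm I I' (braidAct hm I' I'' A)) := by
  have hII' : I ≠ I' := Fin.ne_of_val_ne (by omega)
  have hII'' : I ≠ I'' := Fin.ne_of_val_ne (by omega)
  have hI'I'' : I' ≠ I'' := Fin.ne_of_val_ne (by omega)
  apply (blockEquiv n m ℂ).injective
  simp only [blockEquiv_braidAct]
  refine braidMove_braid hII' hII'' hI'I'' (hA.blockEquiv_apply_eq_zero (Fin.lt_def.2 (by omega))) ?_
  rw [blockEquiv_apply]
  exact hdiag I

/-- the braid relation
`β_{I,I+1} ∘ β_{I+1,I+2} ∘ β_{I,I+1} = β_{I+1,I+2} ∘ β_{I,I+1} ∘ β_{I+1,I+2}`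
holds on block-upper-triangular matrices with invertible diagonal blocks. -/
theorem braid_relation (n m : ℕ) (hn : 3 ≤ n) (hm : 1 ≤ m)
    (I I' I'' : Fin n) (hI' : (I' : ℕ) = (I : ℕ) + 1) (hI'' : (I'' : ℕ) = (I : ℕ) + 2)
    (A : Matrix (Fin (n * m)) (Fin (n * m)) ℂ) (hA : IsBUT n m A)
    (hdiag : ∀ J : Fin n, IsUnit (blk A J J).det) :
    braidAct hm I I' (braidAct hm I' I'' (braidAct hm I I' A))
      = braidAct hm I' I'' (braidAct hm I I' (braidAct hm I' I'' A)) :=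
  braid_relation_general n m hm I I' I'' hI' hI'' A hA hdiag
end
end
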